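/- arXiv:1607.08195 — 2 statements merged into one kernel-verified Lean document; each statement's English description precedes it below -/
import Mathlib

section
/- If 𝒢 is a finite nonempty family of intervals with minimal homomorphism target parameter s = s(𝒢), then the independence number of 𝒢 satisfies α(𝒢) ≥ ⌊s/2⌋ + 1. -/
/-!
If a homomorphism `f : 𝒢 → ℐ(s)` missed some unit interval `[c, c + 1]` with `c ≤ s`, then
contracting that unit interval to a point (reflecting first when `c = s`, and sending `[1, 2]`
onto `[0, 1]` when `c = 0`) would give a homomorphism `𝒢 → ℐ(s - 1)`. So for `s = s(𝒢)` every
unit interval of `ℐ(s)` is hit. The unit intervals `[2k, 2k + 1]`, `k ≤ s / 2`, are pairwise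
non-adjacent, so choosing one preimage of each gives an independent family of `s / 2 + 1`
intervals of `𝒢`.
-/

def AdjI (I J : ℝ × ℝ) : Prop :=
  ∃ x : ℝ, Set.Icc I.1 I.2 ∩ Set.Icc J.1 J.2 = {x}

def AdjN (p q : ℕ × ℕ) : Prop :=
  ∃ x : ℝ, Set.Icc (p.1 : ℝ) p.2 ∩ Set.Icc (q.1 : ℝ) q.2 = {x}

def memIs (s : ℕ) (p : ℕ × ℕ) : Prop :=
  p = (0, 1) ∨ p = (s, s + 1) ∨ (1 ≤ p.1 ∧ p.1 < p.2 ∧ p.2 ≤ s)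

def IsIntervalHom (G : Finset (ℝ × ℝ)) (s : ℕ) (f : ℝ × ℝ → ℕ × ℕ) : Prop :=
  (∀ I ∈ G, memIs s (f I)) ∧ ∀ I ∈ G, ∀ J ∈ G, AdjI I J → AdjN (f I) (f J)

/-- `φ` is a homomorphism from `ℐ(s)` with the unit interval `[c, c + 1]` removed to `ℐ(t)`. -/
structure IsPuncturedHom (s c t : ℕ) (φ : ℕ × ℕ → ℕ × ℕ) : Prop where
  memIs_apply : ∀ p, memIs s p → p ≠ (c, c + 1) → memIs t (φ p)
  adjN_apply : ∀ p q, memIs s p → p ≠ (c, c + 1) → memIs s q → q ≠ (c, c + 1) →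
    AdjN p q → AdjN (φ p) (φ q)

lemma adjN_iff (p q : ℕ × ℕ) : AdjN p q ↔ max p.1 q.1 = min p.2 q.2 := by
  simp only [AdjN, Set.Icc_inter_Icc, Set.Icc_eq_singleton_iff]
  constructor
  · rintro ⟨x, hsup, hinf⟩
    have h : ((max p.1 q.1 : ℕ) : ℝ) = (min p.2 q.2 : ℕ) := by
      push_cast
      rw [hsup, hinf]
    exact_mod_cast h
  · intro h
    refine ⟨(max p.1 q.1 : ℕ), by push_cast; rfl, ?_⟩
    rw [h]
    push_cast
    rfl

lemma not_adjN_even_unit (k l : ℕ) : ¬ AdjN (2 * k, 2 * k + 1) (2 * l, 2 * l + 1) := by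
  rw [adjN_iff]
  dsimp only
  omega

lemma memIs_zero {p : ℕ × ℕ} (hp : memIs 0 p) : p = (0, 1) := by
  simp only [memIs, Prod.ext_iff] at hp ⊢
  omega

lemma memIs_iff_of_ne_zero_one {s : ℕ} {p : ℕ × ℕ} (hp : p ≠ (0, 1)) :
    memIs s p ↔ p = (s, s + 1) ∨ (1 ≤ p.1 ∧ p.1 < p.2 ∧ p.2 ≤ s) := by
  simp [memIs, hp]

def shiftAbove (c x : ℕ) : ℕ := if x ≤ c then x else x - 1

def collapse (c : ℕ) (p : ℕ × ℕ) : ℕ × ℕ := (shiftAbove c p.1, shiftAbove c p.2)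

-- `collapse 0` would send `[1, b]` to `[0, b - 1]`, which is not in `ℐ(s - 1)` for `b > 2`;
-- instead `[1, 2]` is merged into the missing `[0, 1]`.
def collapseBottom (p : ℕ × ℕ) : ℕ × ℕ := if p.2 ≤ 2 then (0, 1) else collapse 1 p

def reflect (s : ℕ) (p : ℕ × ℕ) : ℕ × ℕ := (s + 1 - p.2, s + 1 - p.1)

lemma isPuncturedHom_collapse {s c : ℕ} (hc : 1 ≤ c) (hcs : c < s) :
    IsPuncturedHom s c (s - 1) (collapse c) where
  memIs_apply _ hp hpc := by
    simp only [memIs, collapse, shiftAbove, Ne, Prod.ext_iff] at hp hpc ⊢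
    split_ifs <;> omega
  adjN_apply _ _ _ _ _ _ hpq := by
    rw [adjN_iff] at hpq ⊢
    simp only [collapse, shiftAbove]
    split_ifs <;> omega

lemma isPuncturedHom_collapseBottom {s : ℕ} (hs : 1 ≤ s) :
    IsPuncturedHom s 0 (s - 1) collapseBottom where
  memIs_apply p hp hp0 := by
    rw [memIs_iff_of_ne_zero_one hp0, Prod.ext_iff] at hp
    simp only [memIs, collapseBottom, collapse, shiftAbove, Prod.ext_iff]
    split_ifs <;> omega
  adjN_apply p q hp hp0 hq hq0 hpq := by
    rw [memIs_iff_of_ne_zero_one hp0] at hp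
    rw [memIs_iff_of_ne_zero_one hq0] at hq
    simp only [Prod.ext_iff] at hp hq
    rw [adjN_iff] at hpq ⊢
    simp only [collapseBottom, collapse, shiftAbove]
    split_ifs <;> simp only <;> omega

lemma memIs_reflect {s : ℕ} {p : ℕ × ℕ} (hp : memIs s p) : memIs s (reflect s p) := by
  simp only [memIs, reflect, Prod.ext_iff] at hp ⊢
  omega

lemma reflect_ne_zero_one {s : ℕ} (hs : 1 ≤ s) {p : ℕ × ℕ} (hp : memIs s p)
    (hps : p ≠ (s, s + 1)) : reflect s p ≠ (0, 1) := by
  simp only [memIs, reflect, Ne, Prod.ext_iff] at hp hps ⊢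
  omega

lemma adjN_reflect {s : ℕ} {p q : ℕ × ℕ} (hp : memIs s p) (hq : memIs s q) (hpq : AdjN p q) :
    AdjN (reflect s p) (reflect s q) := by
  simp only [memIs, Prod.ext_iff] at hp hq
  rw [adjN_iff] at hpq ⊢
  simp only [reflect]
  omega

lemma IsPuncturedHom.comp_reflect {s t : ℕ} {φ : ℕ × ℕ → ℕ × ℕ} (hs : 1 ≤ s)
    (hφ : IsPuncturedHom s 0 t φ) : IsPuncturedHom s s t (φ ∘ reflect s) where
  memIs_apply _ hp hps := hφ.memIs_apply _ (memIs_reflect hp) (reflect_ne_zero_one hs hp hps)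
  adjN_apply _ _ hp hps hq hqs hpq :=
    hφ.adjN_apply _ _ (memIs_reflect hp) (reflect_ne_zero_one hs hp hps)
      (memIs_reflect hq) (reflect_ne_zero_one hs hq hqs) (adjN_reflect hp hq hpq)

lemma exists_isPuncturedHom {s c : ℕ} (hs : 1 ≤ s) (hc : c ≤ s) :
    ∃ φ, IsPuncturedHom s c (s - 1) φ := by
  rcases Nat.eq_zero_or_pos c with rfl | hc0
  · exact ⟨_, isPuncturedHom_collapseBottom hs⟩
  rcases hc.eq_or_lt with rfl | hcs
  · exact ⟨_, (isPuncturedHom_collapseBottom hs).comp_reflect hs⟩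
  · exact ⟨_, isPuncturedHom_collapse hc0 hcs⟩

namespace IsIntervalHom

variable {G : Finset (ℝ × ℝ)} {s : ℕ} {f : ℝ × ℝ → ℕ × ℕ}

lemma comp {c t : ℕ} {φ : ℕ × ℕ → ℕ × ℕ} (hf : IsIntervalHom G s f)
    (hφ : IsPuncturedHom s c t φ) (hfc : ∀ I ∈ G, f I ≠ (c, c + 1)) :
    IsIntervalHom G t (φ ∘ f) :=
  ⟨fun I hI => hφ.memIs_apply _ (hf.1 I hI) (hfc I hI),
    fun I hI J hJ hIJ => hφ.adjN_apply _ _ (hf.1 I hI) (hfc I hI) (hf.1 J hJ) (hfc J hJ)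
      (hf.2 I hI J hJ hIJ)⟩

lemma exists_apply_eq_unit (hne : G.Nonempty) (hf : IsIntervalHom G s f)
    (hmin : ∀ s' < s, ¬ ∃ g, IsIntervalHom G s' g) {c : ℕ} (hc : c ≤ s) :
    ∃ I ∈ G, f I = (c, c + 1) := by
  by_contra! hmiss
  rcases Nat.eq_zero_or_pos s with rfl | hs
  · obtain ⟨I, hI⟩ := hne
    obtain rfl : c = 0 := Nat.le_zero.mp hc
    exact hmiss I hI (memIs_zero (hf.1 I hI))
  · obtain ⟨φ, hφ⟩ := exists_isPuncturedHom hs hc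
    exact hmin (s - 1) (Nat.sub_lt hs one_pos) ⟨_, hf.comp hφ hmiss⟩

lemma exists_indep_card_ge (hf : IsIntervalHom G s f)
    (hunit : ∀ c ≤ s, ∃ I ∈ G, f I = (c, c + 1)) :
    ∃ T ⊆ G, (∀ I ∈ T, ∀ J ∈ T, ¬ AdjI I J) ∧ s / 2 + 1 ≤ T.card := by
  classical
  let T := G.filter fun I => ∃ k, f I = (2 * k, 2 * k + 1)
  refine ⟨T, Finset.filter_subset _ _, ?_, ?_⟩
  · intro I hI J hJ hIJ
    obtain ⟨hIG, k, hk⟩ := Finset.mem_filter.mp hI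
    obtain ⟨hJG, l, hl⟩ := Finset.mem_filter.mp hJ
    have hadj := hf.2 I hIG J hJG hIJ
    rw [hk, hl] at hadj
    exact not_adjN_even_unit k l hadj
  · have hunits : (Finset.range (s / 2 + 1)).image (fun k => (2 * k, 2 * k + 1)) ⊆ T.image f := by
      simp only [Finset.subset_iff, Finset.mem_image, Finset.mem_range]
      rintro _ ⟨k, hk, rfl⟩
      obtain ⟨I, hI, hfI⟩ := hunit (2 * k) (by omega)
      exact ⟨I, Finset.mem_filter.mpr ⟨hI, k, hfI⟩, hfI⟩
    have hinj : Function.Injective fun k : ℕ => (2 * k, 2 * k + 1) := fun k l hkl => by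
      simp only [Prod.mk.injEq] at hkl
      omega
    calc s / 2 + 1 = ((Finset.range (s / 2 + 1)).image fun k => (2 * k, 2 * k + 1)).card := by
          rw [Finset.card_image_of_injective _ hinj, Finset.card_range]
      _ ≤ (T.image f).card := Finset.card_le_card hunits
      _ ≤ T.card := Finset.card_image_le

end IsIntervalHom

theorem stmt_10_general (G : Finset (ℝ × ℝ)) (hne : G.Nonempty)
    (s : ℕ)
    (hex : ∃ f : ℝ × ℝ → ℕ × ℕ,
      (∀ I ∈ G, memIs s (f I)) ∧
      (∀ I ∈ G, ∀ J ∈ G, AdjI I J → AdjN (f I) (f J)))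
    (hmin : ∀ s' < s, ¬ ∃ g : ℝ × ℝ → ℕ × ℕ,
      (∀ I ∈ G, memIs s' (g I)) ∧
      (∀ I ∈ G, ∀ J ∈ G, AdjI I J → AdjN (g I) (g J))) :
    ∃ T ⊆ G, (∀ I ∈ T, ∀ J ∈ T, ¬ AdjI I J) ∧ s / 2 + 1 ≤ T.card := by
  obtain ⟨f, hf⟩ := hex
  exact IsIntervalHom.exists_indep_card_ge hf
    fun c hc => IsIntervalHom.exists_apply_eq_unit hne hf hmin hc

/-- If s = s(𝒢) is the minimal parameter of a homomorphism target ℐ(s) for 𝒢, then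
α(𝒢) ≥ ⌊s/2⌋ + 1. -/
theorem stmt_10 (G : Finset (ℝ × ℝ)) (hne : G.Nonempty) (hpos : ∀ I ∈ G, I.1 < I.2)
    (s : ℕ)
    (hex : ∃ f : ℝ × ℝ → ℕ × ℕ,
      (∀ I ∈ G, memIs s (f I)) ∧
      (∀ I ∈ G, ∀ J ∈ G, AdjI I J → AdjN (f I) (f J)))
    (hmin : ∀ s' < s, ¬ ∃ g : ℝ × ℝ → ℕ × ℕ,
      (∀ I ∈ G, memIs s' (g I)) ∧
      (∀ I ∈ G, ∀ J ∈ G, AdjI I J → AdjN (g I) (g J))) :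
    ∃ T ⊆ G, (∀ I ∈ T, ∀ J ∈ T, ¬ AdjI I J) ∧ s / 2 + 1 ≤ T.card :=
  stmt_10_general G hne s hex hmin
end

section
/- If γ is a nonzero formal ℕ-combination of intervals in ℝ with independence number α(γ) > 1 that is incompressible in ℐ(s), then s ≤ 2α(γ) − 1; moreover if s ≥ 3 then the set 𝒮(s) = {[i,i+1] : 0 ≤ i ≤ s} ∪ {[1,3],[s−2,s]} is contained in the support of γ. -/
/-- 𝒮(s) = {[i,i+1] : 0 ≤ i ≤ s} ∪ {[1,3],[s-2,s]}. -/
def memSs (s : ℕ) (p : ℕ × ℕ) : Prop :=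
  (∃ i ≤ s, p = (i, i + 1)) ∨ p = (1, 3) ∨ p = (s - 2, s)

/-!
For intervals of positive length, adjacency means sharing an endpoint. So if some `m ∈ 𝒮(s)`
is missing from the support of `γ`, any map from `ℐ(s) \ {m}` to `ℐ(s - 1)` that keeps
touching intervals touching compresses `γ`. When `m = [i, i+1]` with `0 < i < s` one contracts
`m` to a point; the four boundary intervals `[0,1]`, `[s,s+1]`, `[1,3]`, `[s-2,s]` need a
small reshuffling of the intervals next to `m`. Hence `𝒮(s)` lies in the support when `s ≥ 3`.
The unit intervals `[2i, 2i+1]` with `2i ≤ s` are then pairwise disjoint, so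
`α(γ) ≥ ⌊s/2⌋ + 1`. For `s < 3` the assumption `α(γ) ≥ 2` already gives the bound.
-/

def Touch (p q : ℕ × ℕ) : Prop :=
  p.2 = q.1 ∨ q.2 = p.1

lemma Touch.symm {p q : ℕ × ℕ} (h : Touch p q) : Touch q p :=
  Or.symm h

lemma AdjN.symm {p q : ℕ × ℕ} (h : AdjN p q) : AdjN q p := by
  obtain ⟨x, hx⟩ := h
  exact ⟨x, by rwa [Set.inter_comm]⟩

lemma adjN_mk_of_le {a b c : ℕ} (hab : a ≤ b) (hbc : b ≤ c) : AdjN (a, b) (b, c) := by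
  refine ⟨b, ?_⟩
  dsimp only
  rw [Set.Icc_inter_Icc, max_eq_right (by exact_mod_cast hab),
    min_eq_left (by exact_mod_cast hbc), Set.Icc_self]

lemma adjN_iff_touch {p q : ℕ × ℕ} (hp : p.1 < p.2) (hq : q.1 < q.2) :
    AdjN p q ↔ Touch p q := by
  obtain ⟨a, b⟩ := p
  obtain ⟨c, d⟩ := q
  dsimp only at hp hq
  constructor
  · rintro ⟨x, hx⟩
    rw [Set.Icc_inter_Icc, Set.Icc_eq_singleton_iff] at hx
    have h : max a c = min b d := by exact_mod_cast hx.1.trans hx.2.symm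
    simp only [Touch]
    omega
  · rintro (h | h) <;> dsimp only at h <;> subst h
    · exact adjN_mk_of_le hp.le hq.le
    · exact (adjN_mk_of_le hq.le hp.le).symm

lemma memIs.fst_lt_snd {s : ℕ} {p : ℕ × ℕ} (h : memIs s p) : p.1 < p.2 := by
  rcases h with rfl | rfl | ⟨-, h, -⟩
  exacts [Nat.zero_lt_one, Nat.lt_add_one s, h]

lemma memIs_mk {s a b : ℕ} :
    memIs s (a, b) ↔ (a = 0 ∧ b = 1) ∨ (a = s ∧ b = s + 1) ∨ (1 ≤ a ∧ a < b ∧ b ≤ s) := by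
  simp only [memIs, Prod.mk.injEq]

def IsCompression (s s' : ℕ) (m : ℕ × ℕ) (f : ℕ × ℕ → ℕ × ℕ) : Prop :=
  (∀ p, memIs s p → p ≠ m → memIs s' (f p)) ∧
    ∀ p q, memIs s p → memIs s q → p ≠ m → q ≠ m → p.2 = q.1 → Touch (f p) (f q)

lemma IsCompression.adjN_hom {s s' : ℕ} {m : ℕ × ℕ} {f : ℕ × ℕ → ℕ × ℕ}
    (hf : IsCompression s s' m f) {γ : Multiset (ℕ × ℕ)} (hγ : ∀ p ∈ γ, memIs s p)
    (hm : m ∉ γ) :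
    (∀ p ∈ γ, memIs s' (f p)) ∧ ∀ p ∈ γ, ∀ q ∈ γ, AdjN p q → AdjN (f p) (f q) := by
  have hne : ∀ p ∈ γ, p ≠ m := fun p hp h => hm (h ▸ hp)
  have hmem : ∀ p ∈ γ, memIs s' (f p) := fun p hp => hf.1 p (hγ p hp) (hne p hp)
  refine ⟨hmem, fun p hp q hq hpq => ?_⟩
  rw [adjN_iff_touch (hγ p hp).fst_lt_snd (hγ q hq).fst_lt_snd] at hpq
  rw [adjN_iff_touch (hmem p hp).fst_lt_snd (hmem q hq).fst_lt_snd]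
  rcases hpq with h | h
  · exact hf.2 p q (hγ p hp) (hγ q hq) (hne p hp) (hne q hq) h
  · exact (hf.2 q p (hγ q hq) (hγ p hp) (hne q hq) (hne p hp) h).symm

lemma isCompression_unit {s i : ℕ} (hi : 1 ≤ i) (his : i < s) :
    IsCompression s (s - 1) (i, i + 1)
      (Prod.map (fun x => if x ≤ i then x else x - 1)
        (fun x => if x ≤ i then x else x - 1)) := by
  refine ⟨?_, fun p q _ _ _ _ h => Or.inl (by simp only [Prod.map, h])⟩
  rintro ⟨a, b⟩ hp hm
  rw [memIs_mk] at hp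
  rw [ne_eq, Prod.mk.injEq] at hm
  simp only [Prod.map]
  split_ifs <;> rw [memIs_mk] <;> omega

lemma isCompression_zero_one {s : ℕ} (hs : 2 ≤ s) :
    IsCompression s (s - 1) (0, 1) fun p =>
      if p.1 = 1 ∧ p.2 = 2 then (0, 1)
      else if p.1 = 1 then (1, p.2 - 1) else (p.1 - 1, p.2 - 1) := by
  refine ⟨?_, ?_⟩
  · rintro ⟨a, b⟩ hp hm
    rw [memIs_mk] at hp
    rw [ne_eq, Prod.mk.injEq] at hm
    dsimp only
    split_ifs <;> rw [memIs_mk] <;> omega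
  · rintro ⟨a, b⟩ ⟨c, d⟩ hp hq hpm hqm h
    rw [memIs_mk] at hp hq
    rw [ne_eq, Prod.mk.injEq] at hpm hqm
    dsimp only at h ⊢
    unfold Touch
    split_ifs <;> omega

lemma isCompression_self_succ {s : ℕ} :
    IsCompression s (s - 1) (s, s + 1) fun p =>
      if p.2 = s ∧ p.1 + 1 < s then (p.1, s - 1) else p := by
  refine ⟨?_, ?_⟩
  · rintro ⟨a, b⟩ hp hm
    rw [memIs_mk] at hp
    rw [ne_eq, Prod.mk.injEq] at hm
    dsimp only
    split_ifs <;> rw [memIs_mk] <;> omega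
  · rintro ⟨a, b⟩ ⟨c, d⟩ hp hq hpm hqm h
    rw [memIs_mk] at hp hq
    rw [ne_eq, Prod.mk.injEq] at hpm hqm
    dsimp only at h ⊢
    unfold Touch
    split_ifs <;> omega

lemma isCompression_one_three {s : ℕ} (hs : 3 ≤ s) :
    IsCompression s (s - 1) (1, 3) fun p =>
      if p.1 = 0 then (1, 2) else if p.1 = 1 ∧ p.2 = 2 then (0, 1)
      else if p.1 = 1 then (2, p.2 - 1) else (p.1 - 1, p.2 - 1) := by
  refine ⟨?_, ?_⟩
  · rintro ⟨a, b⟩ hp hm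
    rw [memIs_mk] at hp
    rw [ne_eq, Prod.mk.injEq] at hm
    dsimp only
    split_ifs <;> rw [memIs_mk] <;> omega
  · rintro ⟨a, b⟩ ⟨c, d⟩ hp hq hpm hqm h
    rw [memIs_mk] at hp hq
    rw [ne_eq, Prod.mk.injEq] at hpm hqm
    dsimp only at h ⊢
    unfold Touch
    split_ifs <;> omega

lemma isCompression_sub_two_self {s : ℕ} (hs : 3 ≤ s) :
    IsCompression s (s - 1) (s - 2, s) fun p =>
      if p.1 = s then (s - 2, s - 1)
      else if p.2 = s ∧ p.1 + 1 < s then (p.1, s - 2) else p := by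
  refine ⟨?_, ?_⟩
  · rintro ⟨a, b⟩ hp hm
    rw [memIs_mk] at hp
    rw [ne_eq, Prod.mk.injEq] at hm
    dsimp only
    split_ifs <;> rw [memIs_mk] <;> omega
  · rintro ⟨a, b⟩ ⟨c, d⟩ hp hq hpm hqm h
    rw [memIs_mk] at hp hq
    rw [ne_eq, Prod.mk.injEq] at hpm hqm
    dsimp only at h ⊢
    unfold Touch
    split_ifs <;> omega

lemma exists_isCompression {s : ℕ} (hs : 3 ≤ s) {m : ℕ × ℕ} (hm : memSs s m) :
    ∃ f, IsCompression s (s - 1) m f := by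
  rcases hm with ⟨i, hi, rfl⟩ | rfl | rfl
  · rcases Nat.eq_zero_or_pos i with rfl | hi0
    · exact ⟨_, isCompression_zero_one (by omega)⟩
    rcases hi.lt_or_eq with his | rfl
    · exact ⟨_, isCompression_unit hi0 his⟩
    · exact ⟨_, isCompression_self_succ⟩
  · exact ⟨_, isCompression_one_three hs⟩
  · exact ⟨_, isCompression_sub_two_self hs⟩

lemma mem_of_memSs {s : ℕ} {γ : Multiset (ℕ × ℕ)} (hγ : ∀ p ∈ γ, memIs s p)
    (hinc : ¬ ∃ f : ℕ × ℕ → ℕ × ℕ,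
      (∀ p ∈ γ, memIs (s - 1) (f p)) ∧ ∀ p ∈ γ, ∀ q ∈ γ, AdjN p q → AdjN (f p) (f q))
    (hs : 3 ≤ s) {m : ℕ × ℕ} (hm : memSs s m) : m ∈ γ := by
  by_contra hmγ
  obtain ⟨f, hf⟩ := exists_isCompression hs hm
  exact hinc ⟨f, hf.adjN_hom hγ hmγ⟩

def evenUnitIntervals (s : ℕ) : Finset (ℕ × ℕ) :=
  (Finset.range (s / 2 + 1)).image fun i => (2 * i, 2 * i + 1)

lemma card_evenUnitIntervals (s : ℕ) : (evenUnitIntervals s).card = s / 2 + 1 := by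
  rw [evenUnitIntervals, Finset.card_image_of_injective _ fun i j h => by
    simp only [Prod.mk.injEq] at h; omega, Finset.card_range]

lemma memSs_of_mem_evenUnitIntervals {s : ℕ} {p : ℕ × ℕ} (hp : p ∈ evenUnitIntervals s) :
    memSs s p := by
  obtain ⟨i, hi, rfl⟩ := Finset.mem_image.mp hp
  exact Or.inl ⟨2 * i, by rw [Finset.mem_range] at hi; omega, rfl⟩

lemma not_adjN_of_mem_evenUnitIntervals {s : ℕ} {p q : ℕ × ℕ} (hp : p ∈ evenUnitIntervals s)
    (hq : q ∈ evenUnitIntervals s) : ¬ AdjN p q := by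
  obtain ⟨i, -, rfl⟩ := Finset.mem_image.mp hp
  obtain ⟨j, -, rfl⟩ := Finset.mem_image.mp hq
  rw [adjN_iff_touch (Nat.lt_add_one _) (Nat.lt_add_one _), Touch]
  omega

theorem stmt_13_general (s : ℕ) (γ : Multiset (ℕ × ℕ))
    (hγ : ∀ p ∈ γ, memIs s p)
    (halpha : ∃ t ≤ γ, (∀ p ∈ t, ∀ q ∈ t, ¬ AdjN p q) ∧ 2 ≤ Multiset.card t)
    (hinc : ∀ s' < s, ¬ ∃ f : ℕ × ℕ → ℕ × ℕ,
      (∀ p ∈ γ, memIs s' (f p)) ∧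
      (∀ p ∈ γ, ∀ q ∈ γ, AdjN p q → AdjN (f p) (f q))) :
    (∃ t ≤ γ, (∀ p ∈ t, ∀ q ∈ t, ¬ AdjN p q) ∧ s + 1 ≤ 2 * Multiset.card t) ∧
    (3 ≤ s → ∀ p, memSs s p → p ∈ γ) := by
  have hS : 3 ≤ s → ∀ p, memSs s p → p ∈ γ := fun hs _ =>
    mem_of_memSs hγ (hinc (s - 1) (by omega)) hs
  refine ⟨?_, hS⟩
  rcases lt_or_ge s 3 with hs | hs
  · obtain ⟨t, htγ, ht, hcard⟩ := halpha
    exact ⟨t, htγ, ht, by omega⟩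
  · refine ⟨(evenUnitIntervals s).val, ?_,
      fun p hp q hq => not_adjN_of_mem_evenUnitIntervals hp hq, ?_⟩
    · exact Finset.val_le_iff_val_subset.mpr fun p hp =>
        hS hs p (memSs_of_mem_evenUnitIntervals hp)
    · rw [Finset.card_val, card_evenUnitIntervals]
      omega

/-- An incompressible nonzero combination γ ∈ ℕℐ(s) with α(γ) > 1 satisfies
s ≤ 2α(γ) − 1 (i.e. some independent sub-multiset t has 2|t| ≥ s+1), and for s ≥ 3
the set 𝒮(s) is contained in the support of γ. -/
theorem stmt_13 (s : ℕ) (γ : Multiset (ℕ × ℕ)) (hne : γ ≠ 0)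
    (hγ : ∀ p ∈ γ, memIs s p)
    (halpha : ∃ t ≤ γ, (∀ p ∈ t, ∀ q ∈ t, ¬ AdjN p q) ∧ 2 ≤ Multiset.card t)
    (hinc : ∀ s' < s, ¬ ∃ f : ℕ × ℕ → ℕ × ℕ,
      (∀ p ∈ γ, memIs s' (f p)) ∧
      (∀ p ∈ γ, ∀ q ∈ γ, AdjN p q → AdjN (f p) (f q))) :
    (∃ t ≤ γ, (∀ p ∈ t, ∀ q ∈ t, ¬ AdjN p q) ∧ s + 1 ≤ 2 * Multiset.card t) ∧
    (3 ≤ s → ∀ p, memSs s p → p ∈ γ) :=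
  stmt_13_general s γ hγ halpha hinc
end
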